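/- Let p be a probability distribution on a finite alphabet V and q another probability distribution on V. Define a sampling scheme: draw t ~ q; accept t with probability min(1, p(t)/q(t)); if rejected, draw a replacement from the residual distribution r(t) = max(0, p(t) − q(t)) / Σ_{t'} max(0, p(t') − q(t')). Then the output of this scheme is distributed exactly according to p. -/
import Mathlib


/-- Speculative-decoding rejection sampling: draw `t ~ q`, accept with probability
`min(1, p t / q t)`; on rejection resample from the residual
`r t = max 0 (p t − q t) / Σ max 0 (p − q)`. The output has law exactly `p`:
for every token `t`, the accept-branch mass plus the reject-branch mass equals `p t`. -/
theorem stmt_7 (V : Type*) [Fintype V] (p q : V → ℝ)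
    (hp0 : ∀ t, 0 ≤ p t) (hq0 : ∀ t, 0 < q t)
    (hp1 : ∑ t, p t = 1) (hq1 : ∑ t, q t = 1) (hpq : p ≠ q) :
    ∀ t, q t * min 1 (p t / q t)
        + (1 - ∑ t', min (p t') (q t'))
          * (max 0 (p t - q t) / ∑ t', max 0 (p t' - q t')) = p t := by
  have key : ∀ t, p t - min (p t) (q t) = max 0 (p t - q t) := by
    intro t
    rcases le_total (p t) (q t) with h | h
    · simp [min_eq_left h, max_eq_left (by linarith : p t - q t ≤ 0)]
    · simp [min_eq_right h, max_eq_right (by linarith : (0:ℝ) ≤ p t - q t)]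
  have hsum : 1 - ∑ t', min (p t') (q t') = ∑ t', max 0 (p t' - q t') := by
    rw [← hp1, ← Finset.sum_sub_distrib]
    exact Finset.sum_congr rfl fun t _ => key t
  have hSpos : 0 < ∑ t', max 0 (p t' - q t') := by
    have hnn : ∀ t ∈ Finset.univ, (0:ℝ) ≤ max 0 (p t - q t) := fun t _ => le_max_left _ _
    rcases lt_or_eq_of_le (Finset.sum_nonneg hnn) with h | h
    · exact h
    · exfalso
      have hz : ∀ t ∈ Finset.univ, max 0 (p t - q t) = 0 :=
        (Finset.sum_eq_zero_iff_of_nonneg hnn).mp h.symm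
      have hle : ∀ t, p t ≤ q t := by
        intro t
        have := hz t (Finset.mem_univ t)
        by_contra hc
        push_neg at hc
        have : max 0 (p t - q t) = p t - q t := max_eq_right (by linarith)
        linarith [hz t (Finset.mem_univ t)]
      have heq : ∀ t, p t = q t := by
        intro t
        have hsum2 : ∑ t', (q t' - p t') = 0 := by
          rw [Finset.sum_sub_distrib, hp1, hq1]; ring
        have := (Finset.sum_eq_zero_iff_of_nonneg
          (fun t _ => by linarith [hle t] : ∀ t ∈ Finset.univ, (0:ℝ) ≤ q t - p t)).mp hsum2
          t (Finset.mem_univ t)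
        linarith
      exact hpq (funext heq)
  intro t
  have hq := hq0 t
  have h1 : q t * min 1 (p t / q t) = min (p t) (q t) := by
    rcases le_total (p t) (q t) with h | h
    · rw [min_eq_left h, min_eq_right (by rw [div_le_one hq]; exact h),
        mul_div_cancel₀ _ hq.ne']
    · rw [min_eq_right h, min_eq_left (by rw [le_div_iff₀ hq]; linarith), mul_one]
  have h2 : (∑ t', max 0 (p t' - q t')) * (max 0 (p t - q t) / ∑ t', max 0 (p t' - q t'))
      = max 0 (p t - q t) := by field_simp
  rw [h1, hsum, h2]
  linarith [key t]
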